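/- Assume d·γ ≤ 2·γ*. There exists c > 0, depending only on ℓ, α, m, d, J, γ, γ*, such that for every classical solution u of the hybrid Euler–Bernoulli beam system, every T ≥ 0 and every t ∈ [0,T]: | ℓ·∫₀^t ( u_t(0,τ)² + α·u_xx(0,τ)² ) dτ − ∫₀^t ∫₀^ℓ ( u_t(x,τ)² + α·u_xx(x,τ)² + u_xx(x,τ)² ) dx dτ | ≤ c·(1 + T)·E(0). -/

import Mathlib

open MeasureTheory Function intervalIntegral

/-- Partial derivative in the time variable (second argument). -/
noncomputable def pdt (u : ℝ → ℝ → ℝ) (x t : ℝ) : ℝ := deriv (fun s => u x s) t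

/-- Partial derivative in the space variable (first argument). -/
noncomputable def pdx (u : ℝ → ℝ → ℝ) (x t : ℝ) : ℝ := deriv (fun y => u y t) x

/-- The energy of the hybrid Euler–Bernoulli beam with tip body. -/
noncomputable def energy (ℓ α m d J : ℝ) (u : ℝ → ℝ → ℝ) (t : ℝ) : ℝ :=
  (1 / 2) * (∫ x in (0:ℝ)..ℓ, ((pdt u x t) ^ 2 + α * (pdx (pdx u) x t) ^ 2)) +
    (m / 2) * (pdt u 0 t) ^ 2 + m * d * (pdt (pdx u) 0 t) * (pdt u 0 t) +
    ((J + m * d ^ 2) / 2) * (pdt (pdx u) 0 t) ^ 2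

section Helpers
variable {f : ℝ → ℝ → ℝ}

lemma contDiff_slice_x (hf : ContDiff ℝ (⊤ : ℕ∞) (uncurry f)) (t : ℝ) :
    ContDiff ℝ (⊤ : ℕ∞) (fun y => f y t) :=
  hf.comp (contDiff_id.prodMk contDiff_const)

lemma contDiff_slice_t (hf : ContDiff ℝ (⊤ : ℕ∞) (uncurry f)) (x : ℝ) :
    ContDiff ℝ (⊤ : ℕ∞) (fun s => f x s) :=
  hf.comp (contDiff_const.prodMk contDiff_id)

lemma hasDerivAt_pdx (hf : ContDiff ℝ (⊤ : ℕ∞) (uncurry f)) (x t : ℝ) :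
    HasDerivAt (fun y => f y t) (pdx f x t) x :=
  (((contDiff_slice_x hf t).differentiable (by simp)) x).hasDerivAt

lemma hasDerivAt_pdt (hf : ContDiff ℝ (⊤ : ℕ∞) (uncurry f)) (x t : ℝ) :
    HasDerivAt (fun s => f x s) (pdt f x t) t :=
  (((contDiff_slice_t hf x).differentiable (by simp)) t).hasDerivAt

lemma pdx_eq_fderiv (hf : ContDiff ℝ (⊤ : ℕ∞) (uncurry f)) (x t : ℝ) :
    pdx f x t = fderiv ℝ (uncurry f) (x, t) (1, 0) := by
  have h1 : HasFDerivAt (uncurry f) (fderiv ℝ (uncurry f) (x, t)) (x, t) :=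
    ((hf.differentiable (by simp)) (x, t)).hasFDerivAt
  have h2 : HasDerivAt (fun y : ℝ => (y, t)) ((1 : ℝ), (0 : ℝ)) x :=
    (hasDerivAt_id x).prodMk (hasDerivAt_const x t)
  have h3 : HasDerivAt (fun y => f y t) (fderiv ℝ (uncurry f) (x, t) (1, 0)) x := by
    have := h1.comp_hasDerivAt x h2; exact this
  unfold pdx
  exact h3.deriv

lemma pdt_eq_fderiv (hf : ContDiff ℝ (⊤ : ℕ∞) (uncurry f)) (x t : ℝ) :
    pdt f x t = fderiv ℝ (uncurry f) (x, t) (0, 1) := by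
  have h1 : HasFDerivAt (uncurry f) (fderiv ℝ (uncurry f) (x, t)) (x, t) :=
    ((hf.differentiable (by simp)) (x, t)).hasFDerivAt
  have h2 : HasDerivAt (fun s : ℝ => (x, s)) ((0 : ℝ), (1 : ℝ)) t :=
    (hasDerivAt_const t x).prodMk (hasDerivAt_id t)
  have h3 : HasDerivAt (fun s => f x s) (fderiv ℝ (uncurry f) (x, t) (0, 1)) t :=
    h1.comp_hasDerivAt t h2
  unfold pdt
  exact h3.deriv

lemma contDiff_pdx (hf : ContDiff ℝ (⊤ : ℕ∞) (uncurry f)) : ContDiff ℝ (⊤ : ℕ∞) (uncurry (pdx f)) := by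
  have h : ContDiff ℝ (⊤ : ℕ∞) (fun p : ℝ × ℝ => fderiv ℝ (uncurry f) p (1, 0)) :=
    (hf.fderiv_right (by simp)).clm_apply contDiff_const
  have he : uncurry (pdx f) = fun p : ℝ × ℝ => fderiv ℝ (uncurry f) p (1, 0) := by
    funext p
    exact pdx_eq_fderiv hf p.1 p.2
  rw [he]; exact h

lemma contDiff_pdt (hf : ContDiff ℝ (⊤ : ℕ∞) (uncurry f)) : ContDiff ℝ (⊤ : ℕ∞) (uncurry (pdt f)) := by
  have h : ContDiff ℝ (⊤ : ℕ∞) (fun p : ℝ × ℝ => fderiv ℝ (uncurry f) p (0, 1)) :=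
    (hf.fderiv_right (by simp)).clm_apply contDiff_const
  have he : uncurry (pdt f) = fun p : ℝ × ℝ => fderiv ℝ (uncurry f) p (0, 1) := by
    funext p
    exact pdt_eq_fderiv hf p.1 p.2
  rw [he]; exact h

lemma pdt_pdx_comm (hf : ContDiff ℝ (⊤ : ℕ∞) (uncurry f)) (x t : ℝ) :
    pdt (pdx f) x t = pdx (pdt f) x t := by
  have hd1 : ContDiff ℝ (⊤ : ℕ∞) (fderiv ℝ (uncurry f)) := hf.fderiv_right (by simp)
  have hsym : IsSymmSndFDerivAt ℝ (uncurry f) (x, t) :=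
    hf.contDiffAt.isSymmSndFDerivAt (by norm_num; exact WithTop.coe_le_coe.mpr (le_top : (2:ℕ∞) ≤ ⊤))
  have h1 : HasFDerivAt (fderiv ℝ (uncurry f))
      (fderiv ℝ (fderiv ℝ (uncurry f)) (x, t)) (x, t) :=
    ((hd1.differentiable (by simp)) (x, t)).hasFDerivAt
  -- pdt (pdx f) x t
  have e1 : pdt (pdx f) x t = fderiv ℝ (fderiv ℝ (uncurry f)) (x, t) (0, 1) (1, 0) := by
    have h2 : HasDerivAt (fun s : ℝ => (x, s)) ((0 : ℝ), (1 : ℝ)) t :=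
      (hasDerivAt_const t x).prodMk (hasDerivAt_id t)
    have h3 : HasDerivAt (fun s : ℝ => fderiv ℝ (uncurry f) (x, s))
        (fderiv ℝ (fderiv ℝ (uncurry f)) (x, t) (0, 1)) t := h1.comp_hasDerivAt t h2
    have h4 : HasDerivAt (fun s : ℝ => fderiv ℝ (uncurry f) (x, s) (1, 0))
        (fderiv ℝ (fderiv ℝ (uncurry f)) (x, t) (0, 1) (1, 0)) t := by
      simpa using h3.clm_apply (hasDerivAt_const t ((1 : ℝ), (0 : ℝ)))
    have h5 : (fun s : ℝ => pdx f x s) = fun s : ℝ => fderiv ℝ (uncurry f) (x, s) (1, 0) := by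
      funext s; exact pdx_eq_fderiv hf x s
    show deriv (fun s => pdx f x s) t = _
    rw [h5]; exact h4.deriv
  have e2 : pdx (pdt f) x t = fderiv ℝ (fderiv ℝ (uncurry f)) (x, t) (1, 0) (0, 1) := by
    have h2 : HasDerivAt (fun y : ℝ => (y, t)) ((1 : ℝ), (0 : ℝ)) x :=
      (hasDerivAt_id x).prodMk (hasDerivAt_const x t)
    have h3 : HasDerivAt (fun y : ℝ => fderiv ℝ (uncurry f) (y, t))
        (fderiv ℝ (fderiv ℝ (uncurry f)) (x, t) (1, 0)) x := h1.comp_hasDerivAt x h2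
    have h4 : HasDerivAt (fun y : ℝ => fderiv ℝ (uncurry f) (y, t) (0, 1))
        (fderiv ℝ (fderiv ℝ (uncurry f)) (x, t) (1, 0) (0, 1)) x := by
      simpa using h3.clm_apply (hasDerivAt_const x ((0 : ℝ), (1 : ℝ)))
    have h5 : (fun y : ℝ => pdt f y t) = fun y : ℝ => fderiv ℝ (uncurry f) (y, t) (0, 1) := by
      funext y; exact pdt_eq_fderiv hf y t
    show deriv (fun y => pdt f y t) x = _
    rw [h5]; exact h4.deriv
  rw [e1, e2]
  exact hsym.eq _ _

end Helpers
section HelpersB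

lemma beam_zero_on_nonneg {g : ℝ → ℝ} (hg : Continuous g) (h : ∀ s > (0:ℝ), g s = 0) :
    ∀ s, 0 ≤ s → g s = 0 := by
  intro s hs
  have h1 : Set.EqOn g (fun _ => (0:ℝ)) (Set.Ioi 0) := fun x hx => h x hx
  have h2 : Set.EqOn g (fun _ => (0:ℝ)) (closure (Set.Ioi 0)) :=
    h1.closure hg continuous_const
  have : s ∈ closure (Set.Ioi (0:ℝ)) := by rwa [closure_Ioi, Set.mem_Ici]
  exact h2 this

lemma beam_sq_integral_le {g : ℝ → ℝ} (hg : Continuous g) {a b : ℝ} (hab : a ≤ b) :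
    (∫ x in a..b, g x) ^ 2 ≤ (b - a) * ∫ x in a..b, g x ^ 2 := by
  rcases eq_or_lt_of_le hab with rfl | hlt
  · simp
  · set L := b - a with hL
    have hL0 : 0 < L := by simp [hL]; linarith
    set I := ∫ x in a..b, g x with hI
    have hgi : IntervalIntegrable g volume a b := hg.intervalIntegrable _ _
    have hg2 : IntervalIntegrable (fun x => g x ^ 2) volume a b :=
      (hg.pow 2).intervalIntegrable _ _
    have h1 : (0:ℝ) ≤ ∫ x in a..b, (L * g x - I) ^ 2 :=
      intervalIntegral.integral_nonneg hab fun x _ => sq_nonneg _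
    have h2 : (fun x => (L * g x - I) ^ 2)
        = fun x => L ^ 2 * g x ^ 2 - (2 * L * I) * g x + I ^ 2 := by
      funext x; ring
    rw [h2] at h1
    rw [intervalIntegral.integral_add (((hg2.const_mul _).sub (hgi.const_mul _)))
        intervalIntegrable_const,
      intervalIntegral.integral_sub (hg2.const_mul _) (hgi.const_mul _),
      intervalIntegral.integral_const_mul, intervalIntegral.integral_const_mul,
      intervalIntegral.integral_const] at h1
    have h3 : (0:ℝ) ≤ L ^ 2 * (∫ x in a..b, g x ^ 2) - L * I ^ 2 := by
      rw [smul_eq_mul] at h1; nlinarith [h1]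
    nlinarith [h3, hL0]

lemma beam_swap_integral {g : ℝ → ℝ → ℝ} (hg : Continuous (uncurry g)) {a b c e : ℝ}
    (hab : a ≤ b) (hce : c ≤ e) :
    ∫ x in a..b, ∫ y in c..e, g x y = ∫ y in c..e, ∫ x in a..b, g x y := by
  have h1 : IntegrableOn (uncurry g) (Set.Icc a b ×ˢ Set.Icc c e) (volume.prod volume) :=
    hg.continuousOn.integrableOn_compact (isCompact_Icc.prod isCompact_Icc)
  have h2 : Integrable (uncurry g)
      ((volume.restrict (Set.Ioc a b)).prod (volume.restrict (Set.Ioc c e))) := by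
    rw [Measure.prod_restrict]
    exact h1.mono_set (Set.prod_mono Set.Ioc_subset_Icc_self Set.Ioc_subset_Icc_self)
  rw [intervalIntegral.integral_of_le hab, intervalIntegral.integral_of_le hce]
  simp_rw [intervalIntegral.integral_of_le hce, intervalIntegral.integral_of_le hab]
  exact MeasureTheory.integral_integral_swap h2

lemma beam_continuous_param {g : ℝ → ℝ → ℝ} (hg : Continuous (uncurry g)) (a b : ℝ) :
    Continuous fun τ => ∫ x in a..b, g x τ := by
  have h : Continuous (uncurry fun (τ : ℝ) (x : ℝ) => g x τ) := hg.comp continuous_swap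
  exact intervalIntegral.continuous_parametric_intervalIntegral_of_continuous' h a b

lemma beam_quad_lower {A B C : ℝ} (hA : 0 < A) (hC : 0 < C) (hD : B ^ 2 < 4 * A * C) :
    (0 < (A * C - B ^ 2 / 4) / (A + C)) ∧
    ∀ a b : ℝ, (A * C - B ^ 2 / 4) / (A + C) * (a ^ 2 + b ^ 2)
      ≤ A * a ^ 2 + B * a * b + C * b ^ 2 := by
  set c0 := (A * C - B ^ 2 / 4) / (A + C) with hc0
  have hAC : 0 < A + C := by linarith
  have hc0pos : 0 < c0 := by
    apply div_pos _ hAC; nlinarith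
  refine ⟨hc0pos, fun a b => ?_⟩
  have key : c0 * (A + C) = A * C - B ^ 2 / 4 := div_mul_cancel₀ _ (ne_of_gt hAC)
  have hAc0 : 0 < A - c0 := by nlinarith [sq_nonneg B]
  have hprod : 4 * (A - c0) * (C - c0) = B ^ 2 + 4 * c0 ^ 2 := by nlinarith [key]
  nlinarith [sq_nonneg (2 * (A - c0) * a + B * b), sq_nonneg (c0 * b), hAc0,
    mul_pos hAc0 hc0pos, sq_nonneg b, sq_nonneg (c0 * a)]

end HelpersB

section Main
variable {ℓ α : ℝ} {u : ℝ → ℝ → ℝ}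

/-- continuity of a time-slice -/
lemma beam_cont_t (hf : ContDiff ℝ (⊤ : ℕ∞) (uncurry u)) (x : ℝ) : Continuous fun s => u x s :=
  (contDiff_slice_t hf x).continuous

lemma beam_cont_x (hf : ContDiff ℝ (⊤ : ℕ∞) (uncurry u)) (t : ℝ) : Continuous fun y => u y t :=
  (contDiff_slice_x hf t).continuous

/-- boundary values at `x = ℓ` for time derivatives -/
lemma beam_bd_l (hu : ContDiff ℝ (⊤ : ℕ∞) (uncurry u))
    (hcl : ∀ t ≥ (0:ℝ), u ℓ t = 0 ∧ pdx u ℓ t = 0) :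
    ∀ τ ≥ (0:ℝ), pdt u ℓ τ = 0 ∧ pdt (pdx u) ℓ τ = 0 := by
  have h1 : ∀ s > (0:ℝ), pdt u ℓ s = 0 := by
    intro s hs
    have he : (fun s' => u ℓ s') =ᶠ[nhds s] fun _ => (0:ℝ) := by
      filter_upwards [Ioi_mem_nhds hs] with y hy using (hcl y (le_of_lt hy)).1
    show deriv (fun s' => u ℓ s') s = 0
    rw [he.deriv_eq, deriv_const]
  have h2 : ∀ s > (0:ℝ), pdt (pdx u) ℓ s = 0 := by
    intro s hs
    have he : (fun s' => pdx u ℓ s') =ᶠ[nhds s] fun _ => (0:ℝ) := by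
      filter_upwards [Ioi_mem_nhds hs] with y hy using (hcl y (le_of_lt hy)).2
    show deriv (fun s' => pdx u ℓ s') s = 0
    rw [he.deriv_eq, deriv_const]
  intro τ hτ
  exact ⟨beam_zero_on_nonneg (beam_cont_t (contDiff_pdt hu) ℓ) h1 τ hτ,
    beam_zero_on_nonneg (beam_cont_t (contDiff_pdt (contDiff_pdx hu)) ℓ) h2 τ hτ⟩

/-- time-FTC + Fubini -/
lemma beam_time_fubini {g gt : ℝ → ℝ → ℝ} {t : ℝ}
    (hg : ∀ x τ, HasDerivAt (fun s => g x s) (gt x τ) τ)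
    (hgc : Continuous (uncurry g)) (hgtc : Continuous (uncurry gt))
    (hℓ : 0 ≤ ℓ) (ht : 0 ≤ t) :
    (∫ x in (0:ℝ)..ℓ, g x t) - (∫ x in (0:ℝ)..ℓ, g x 0)
      = ∫ τ in (0:ℝ)..t, ∫ x in (0:ℝ)..ℓ, gt x τ := by
  have hint : ∀ x, IntervalIntegrable (fun τ => gt x τ) volume 0 t := by
    intro x
    exact ((hgtc.comp (Continuous.prodMk_right x)).intervalIntegrable 0 t)
  have hstep : ∀ x : ℝ, g x t - g x 0 = ∫ τ in (0:ℝ)..t, gt x τ := by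
    intro x
    exact (intervalIntegral.integral_eq_sub_of_hasDerivAt
      (fun τ _ => hg x τ) (hint x)).symm
  have hc1 : Continuous fun x : ℝ => g x t := hgc.comp (continuous_id.prodMk continuous_const)
  have hc2 : Continuous fun x : ℝ => g x 0 := hgc.comp (continuous_id.prodMk continuous_const)
  calc (∫ x in (0:ℝ)..ℓ, g x t) - ∫ x in (0:ℝ)..ℓ, g x 0
      = ∫ x in (0:ℝ)..ℓ, (g x t - g x 0) :=
        (intervalIntegral.integral_sub (hc1.intervalIntegrable _ _)
          (hc2.intervalIntegrable _ _)).symm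
    _ = ∫ x in (0:ℝ)..ℓ, ∫ τ in (0:ℝ)..t, gt x τ :=
        intervalIntegral.integral_congr (fun x _ => hstep x)
    _ = ∫ τ in (0:ℝ)..t, ∫ x in (0:ℝ)..ℓ, gt x τ := beam_swap_integral hgtc hℓ ht

/-- spatial identity for the energy derivative -/
lemma beam_energy_space (hℓ : 0 < ℓ) (hu : ContDiff ℝ (⊤ : ℕ∞) (uncurry u))
    (hpde : ∀ x ∈ Set.Icc (0:ℝ) ℓ, ∀ t ≥ (0:ℝ),
        pdt (pdt u) x t + α * pdx (pdx (pdx (pdx u))) x t = 0)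
    (hcl : ∀ t ≥ (0:ℝ), u ℓ t = 0 ∧ pdx u ℓ t = 0)
    {τ : ℝ} (hτ : 0 ≤ τ) :
    ∫ x in (0:ℝ)..ℓ, (pdt u x τ * pdt (pdt u) x τ
        + α * (pdx (pdx u) x τ * pdt (pdx (pdx u)) x τ))
      = α * (pdt u 0 τ * pdx (pdx (pdx u)) 0 τ)
        - α * (pdt (pdx u) 0 τ * pdx (pdx u) 0 τ) := by
  set Ψ : ℝ → ℝ := fun y => α * (-(pdt u y τ) * pdx (pdx (pdx u)) y τ
      + pdx (pdt u) y τ * pdx (pdx u) y τ) with hΨ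
  set Ψd : ℝ → ℝ := fun y => α * (pdx (pdx (pdt u)) y τ * pdx (pdx u) y τ
      - pdt u y τ * pdx (pdx (pdx (pdx u))) y τ) with hΨd
  have hderiv : ∀ y : ℝ, HasDerivAt Ψ (Ψd y) y := by
    intro y
    have h1 : HasDerivAt (fun z => pdt u z τ) (pdx (pdt u) y τ) y :=
      hasDerivAt_pdx (contDiff_pdt hu) y τ
    have h2 : HasDerivAt (fun z => pdx (pdx (pdx u)) z τ)
        (pdx (pdx (pdx (pdx u))) y τ) y :=
      hasDerivAt_pdx (contDiff_pdx (contDiff_pdx (contDiff_pdx hu))) y τ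
    have h3 : HasDerivAt (fun z => pdx (pdt u) z τ) (pdx (pdx (pdt u)) y τ) y :=
      hasDerivAt_pdx (contDiff_pdx (contDiff_pdt hu)) y τ
    have h4 : HasDerivAt (fun z => pdx (pdx u) z τ) (pdx (pdx (pdx u)) y τ) y :=
      hasDerivAt_pdx (contDiff_pdx (contDiff_pdx hu)) y τ
    have hA := ((h1.fun_neg.fun_mul h2).fun_add (h3.fun_mul h4)).const_mul α
    exact hA.congr_deriv (by ring)
  have hΨdc : Continuous Ψd := by
    have c1 : Continuous fun y => pdx (pdx (pdt u)) y τ :=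
      beam_cont_x (contDiff_pdx (contDiff_pdx (contDiff_pdt hu))) τ
    have c2 : Continuous fun y => pdx (pdx u) y τ :=
      beam_cont_x (contDiff_pdx (contDiff_pdx hu)) τ
    have c3 : Continuous fun y => pdt u y τ := beam_cont_x (contDiff_pdt hu) τ
    have c4 : Continuous fun y => pdx (pdx (pdx (pdx u))) y τ :=
      beam_cont_x (contDiff_pdx (contDiff_pdx (contDiff_pdx (contDiff_pdx hu)))) τ
    exact continuous_const.mul ((c1.mul c2).sub (c3.mul c4))
  have hEq : Set.EqOn (fun x => pdt u x τ * pdt (pdt u) x τ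
      + α * (pdx (pdx u) x τ * pdt (pdx (pdx u)) x τ)) Ψd (Set.uIcc 0 ℓ) := by
    intro x hx
    rw [Set.uIcc_of_le hℓ.le] at hx
    have hp := hpde x hx τ hτ
    have e1 : pdt (pdt u) x τ = -(α * pdx (pdx (pdx (pdx u))) x τ) := by linarith
    have e2 : pdt (pdx (pdx u)) x τ = pdx (pdx (pdt u)) x τ := by
      rw [pdt_pdx_comm (contDiff_pdx hu) x τ]
      have hfe : (fun y => pdt (pdx u) y τ) = fun y => pdx (pdt u) y τ :=
        funext fun y => pdt_pdx_comm hu y τ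
      show deriv (fun y => pdt (pdx u) y τ) x = _
      rw [hfe]
      rfl
    simp only [hΨd]
    rw [e1, e2]; ring
  rw [intervalIntegral.integral_congr hEq,
    intervalIntegral.integral_eq_sub_of_hasDerivAt (fun y _ => hderiv y)
      (hΨdc.intervalIntegrable _ _)]
  have hb := beam_bd_l hu hcl τ hτ
  have hxt : pdx (pdt u) ℓ τ = pdt (pdx u) ℓ τ := (pdt_pdx_comm hu ℓ τ).symm
  have hxt0 : pdx (pdt u) 0 τ = pdt (pdx u) 0 τ := (pdt_pdx_comm hu 0 τ).symm
  simp only [hΨ]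
  rw [hb.1, hxt, hb.2, hxt0]
  ring

lemma beam_energy_identity {m d J γ γs : ℝ} (hℓ : 0 < ℓ)
    (hu : ContDiff ℝ (⊤ : ℕ∞) (uncurry u))
    (hpde : ∀ x ∈ Set.Icc (0:ℝ) ℓ, ∀ t ≥ (0:ℝ),
        pdt (pdt u) x t + α * pdx (pdx (pdx (pdx u))) x t = 0)
    (hbc1 : ∀ t ≥ (0:ℝ),
        m * pdt (pdt u) 0 t + m * d * pdt (pdt (pdx u)) 0 t + γ * pdt u 0 t +
          α * pdx (pdx (pdx u)) 0 t = 0)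
    (hbc2 : ∀ t ≥ (0:ℝ),
        m * d * pdt (pdt u) 0 t + (J + m * d ^ 2) * pdt (pdt (pdx u)) 0 t +
          d * γ * pdt u 0 t + d * γs * pdt (pdx u) 0 t - α * pdx (pdx u) 0 t = 0)
    (hcl : ∀ t ≥ (0:ℝ), u ℓ t = 0 ∧ pdx u ℓ t = 0)
    {t : ℝ} (ht : 0 ≤ t) :
    energy ℓ α m d J u t = energy ℓ α m d J u 0 + ∫ τ in (0:ℝ)..t,
      (-(γ * (pdt u 0 τ) ^ 2) - d * γ * (pdt u 0 τ) * (pdt (pdx u) 0 τ)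
        - d * γs * (pdt (pdx u) 0 τ) ^ 2) := by
  have cT : Continuous (uncurry (pdt u)) := (contDiff_pdt hu).continuous
  have cTT : Continuous (uncurry (pdt (pdt u))) := (contDiff_pdt (contDiff_pdt hu)).continuous
  have cXX : Continuous (uncurry (pdx (pdx u))) := (contDiff_pdx (contDiff_pdx hu)).continuous
  have cTXX : Continuous (uncurry (pdt (pdx (pdx u)))) :=
    (contDiff_pdt (contDiff_pdx (contDiff_pdx hu))).continuous
  -- inner part
  have hg : ∀ x τ : ℝ, HasDerivAt
      (fun s => (pdt u x s) ^ 2 + α * (pdx (pdx u) x s) ^ 2)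
      (2 * (pdt u x τ * pdt (pdt u) x τ
        + α * (pdx (pdx u) x τ * pdt (pdx (pdx u)) x τ))) τ := by
    intro x τ
    have hv : HasDerivAt (fun s => pdt u x s) (pdt (pdt u) x τ) τ :=
      hasDerivAt_pdt (contDiff_pdt hu) x τ
    have hw : HasDerivAt (fun s => pdx (pdx u) x s) (pdt (pdx (pdx u)) x τ) τ :=
      hasDerivAt_pdt (contDiff_pdx (contDiff_pdx hu)) x τ
    have := (hv.pow 2).add ((hw.pow 2).const_mul α)
    exact this.congr_deriv (by ring)
  have hgc : Continuous (uncurry fun (x τ : ℝ) =>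
      (pdt u x τ) ^ 2 + α * (pdx (pdx u) x τ) ^ 2) := by
    show Continuous fun p : ℝ × ℝ =>
      (uncurry (pdt u) p) ^ 2 + α * (uncurry (pdx (pdx u)) p) ^ 2
    exact (cT.pow 2).add (continuous_const.mul (cXX.pow 2))
  have hgtc : Continuous (uncurry fun (x τ : ℝ) =>
      2 * (pdt u x τ * pdt (pdt u) x τ
        + α * (pdx (pdx u) x τ * pdt (pdx (pdx u)) x τ))) := by
    show Continuous fun p : ℝ × ℝ => 2 * (uncurry (pdt u) p * uncurry (pdt (pdt u)) p
      + α * (uncurry (pdx (pdx u)) p * uncurry (pdt (pdx (pdx u))) p))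
    exact continuous_const.mul ((cT.mul cTT).add (continuous_const.mul (cXX.mul cTXX)))
  have hfub := beam_time_fubini (t := t)
      (g := fun x τ => (pdt u x τ) ^ 2 + α * (pdx (pdx u) x τ) ^ 2)
      (gt := fun x τ => 2 * (pdt u x τ * pdt (pdt u) x τ
        + α * (pdx (pdx u) x τ * pdt (pdx (pdx u)) x τ)))
      hg hgc hgtc hℓ.le ht
  -- rewrite the inner double integral pointwise
  have hEq1 : Set.EqOn
      (fun τ => ∫ x in (0:ℝ)..ℓ, (2 * (pdt u x τ * pdt (pdt u) x τ
        + α * (pdx (pdx u) x τ * pdt (pdx (pdx u)) x τ))))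
      (fun τ => 2 * (α * (pdt u 0 τ * pdx (pdx (pdx u)) 0 τ)
        - α * (pdt (pdx u) 0 τ * pdx (pdx u) 0 τ)))
      (Set.uIcc 0 t) := by
    intro τ hτ
    rw [Set.uIcc_of_le ht] at hτ
    dsimp only
    have h2 : ∫ x in (0:ℝ)..ℓ, (2 * (pdt u x τ * pdt (pdt u) x τ
        + α * (pdx (pdx u) x τ * pdt (pdx (pdx u)) x τ)))
        = 2 * ∫ x in (0:ℝ)..ℓ, (pdt u x τ * pdt (pdt u) x τ
        + α * (pdx (pdx u) x τ * pdt (pdx (pdx u)) x τ)) :=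
      intervalIntegral.integral_const_mul _ _
    rw [h2, beam_energy_space hℓ hu hpde hcl hτ.1]
  -- tip part
  have hK : ∀ τ : ℝ, HasDerivAt (fun s => m / 2 * (pdt u 0 s) ^ 2
      + m * d * (pdt (pdx u) 0 s) * (pdt u 0 s) + (J + m * d ^ 2) / 2 * (pdt (pdx u) 0 s) ^ 2)
      (m * (pdt u 0 τ) * (pdt (pdt u) 0 τ)
        + m * d * ((pdt (pdt (pdx u)) 0 τ) * (pdt u 0 τ) + (pdt (pdx u) 0 τ) * (pdt (pdt u) 0 τ))
        + (J + m * d ^ 2) * (pdt (pdx u) 0 τ) * (pdt (pdt (pdx u)) 0 τ)) τ := by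
    intro τ
    have hv : HasDerivAt (fun s => pdt u 0 s) (pdt (pdt u) 0 τ) τ :=
      hasDerivAt_pdt (contDiff_pdt hu) 0 τ
    have hw : HasDerivAt (fun s => pdt (pdx u) 0 s) (pdt (pdt (pdx u)) 0 τ) τ :=
      hasDerivAt_pdt (contDiff_pdt (contDiff_pdx hu)) 0 τ
    have := (((hv.fun_pow 2).const_mul (m / 2)).fun_add
        (((hw.fun_mul hv).const_mul (m * d)))).fun_add ((hw.fun_pow 2).const_mul ((J + m * d ^ 2) / 2))
    exact (this.congr_deriv (by ring)).congr_of_eventuallyEq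
      (Filter.Eventually.of_forall fun s => by simp only [mul_assoc])
  have cT0 : Continuous fun s => pdt u 0 s := beam_cont_t (contDiff_pdt hu) 0
  have cTT0 : Continuous fun s => pdt (pdt u) 0 s := beam_cont_t (contDiff_pdt (contDiff_pdt hu)) 0
  have cTX0 : Continuous fun s => pdt (pdx u) 0 s := beam_cont_t (contDiff_pdt (contDiff_pdx hu)) 0
  have cTTX0 : Continuous fun s => pdt (pdt (pdx u)) 0 s :=
    beam_cont_t (contDiff_pdt (contDiff_pdt (contDiff_pdx hu))) 0
  have cX30 : Continuous fun s => pdx (pdx (pdx u)) 0 s :=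
    beam_cont_t (contDiff_pdx (contDiff_pdx (contDiff_pdx hu))) 0
  have cX20 : Continuous fun s => pdx (pdx u) 0 s := beam_cont_t (contDiff_pdx (contDiff_pdx hu)) 0
  have hKc : Continuous fun τ => m * (pdt u 0 τ) * (pdt (pdt u) 0 τ)
        + m * d * ((pdt (pdt (pdx u)) 0 τ) * (pdt u 0 τ) + (pdt (pdx u) 0 τ) * (pdt (pdt u) 0 τ))
        + (J + m * d ^ 2) * (pdt (pdx u) 0 τ) * (pdt (pdt (pdx u)) 0 τ) :=
    (((continuous_const.mul cT0).mul cTT0).add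
      (continuous_const.mul ((cTTX0.mul cT0).add (cTX0.mul cTT0)))).add
      (((continuous_const.mul cTX0)).mul cTTX0)
  have hKint := intervalIntegral.integral_eq_sub_of_hasDerivAt
    (f := fun s => m / 2 * (pdt u 0 s) ^ 2 + m * d * (pdt (pdx u) 0 s) * (pdt u 0 s)
      + (J + m * d ^ 2) / 2 * (pdt (pdx u) 0 s) ^ 2)
    (fun τ _ => hK τ) (hKc.intervalIntegrable 0 t)
  -- assemble
  have hb1 : Continuous fun τ => α * (pdt u 0 τ * pdx (pdx (pdx u)) 0 τ)
      - α * (pdt (pdx u) 0 τ * pdx (pdx u) 0 τ) :=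
    (continuous_const.mul (cT0.mul cX30)).sub (continuous_const.mul (cTX0.mul cX20))
  have e2 : (∫ τ in (0:ℝ)..t, ∫ x in (0:ℝ)..ℓ, (2 * (pdt u x τ * pdt (pdt u) x τ
        + α * (pdx (pdx u) x τ * pdt (pdx (pdx u)) x τ))))
      = 2 * ∫ τ in (0:ℝ)..t, (α * (pdt u 0 τ * pdx (pdx (pdx u)) 0 τ)
        - α * (pdt (pdx u) 0 τ * pdx (pdx u) 0 τ)) := by
    rw [intervalIntegral.integral_congr hEq1]
    exact intervalIntegral.integral_const_mul 2 _
  rw [e2] at hfub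
  have e3 : ∫ τ in (0:ℝ)..t, ((α * (pdt u 0 τ * pdx (pdx (pdx u)) 0 τ)
        - α * (pdt (pdx u) 0 τ * pdx (pdx u) 0 τ))
      + (m * (pdt u 0 τ) * (pdt (pdt u) 0 τ)
        + m * d * ((pdt (pdt (pdx u)) 0 τ) * (pdt u 0 τ) + (pdt (pdx u) 0 τ) * (pdt (pdt u) 0 τ))
        + (J + m * d ^ 2) * (pdt (pdx u) 0 τ) * (pdt (pdt (pdx u)) 0 τ)))
      = (∫ τ in (0:ℝ)..t, (α * (pdt u 0 τ * pdx (pdx (pdx u)) 0 τ)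
        - α * (pdt (pdx u) 0 τ * pdx (pdx u) 0 τ)))
      + ∫ τ in (0:ℝ)..t, (m * (pdt u 0 τ) * (pdt (pdt u) 0 τ)
        + m * d * ((pdt (pdt (pdx u)) 0 τ) * (pdt u 0 τ) + (pdt (pdx u) 0 τ) * (pdt (pdt u) 0 τ))
        + (J + m * d ^ 2) * (pdt (pdx u) 0 τ) * (pdt (pdt (pdx u)) 0 τ)) :=
    intervalIntegral.integral_add (hb1.intervalIntegrable 0 t) (hKc.intervalIntegrable 0 t)
  have hEq2 : Set.EqOn (fun τ => (α * (pdt u 0 τ * pdx (pdx (pdx u)) 0 τ)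
        - α * (pdt (pdx u) 0 τ * pdx (pdx u) 0 τ))
      + (m * (pdt u 0 τ) * (pdt (pdt u) 0 τ)
        + m * d * ((pdt (pdt (pdx u)) 0 τ) * (pdt u 0 τ) + (pdt (pdx u) 0 τ) * (pdt (pdt u) 0 τ))
        + (J + m * d ^ 2) * (pdt (pdx u) 0 τ) * (pdt (pdt (pdx u)) 0 τ)))
      (fun τ => -(γ * (pdt u 0 τ) ^ 2) - d * γ * (pdt u 0 τ) * (pdt (pdx u) 0 τ)
        - d * γs * (pdt (pdx u) 0 τ) ^ 2) (Set.uIcc 0 t) := by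
    intro τ hτ
    rw [Set.uIcc_of_le ht] at hτ
    dsimp only
    linear_combination (pdt u 0 τ) * hbc1 τ hτ.1 + (pdt (pdx u) 0 τ) * hbc2 τ hτ.1
  have key := intervalIntegral.integral_congr (μ := volume) hEq2
  rw [e3] at key
  simp only [energy]
  linarith [hfub, hKint, key]

/-- spatial identity for the multiplier -/
lemma beam_mult_space (hℓ : 0 < ℓ) (hu : ContDiff ℝ (⊤ : ℕ∞) (uncurry u))
    (hpde : ∀ x ∈ Set.Icc (0:ℝ) ℓ, ∀ t ≥ (0:ℝ),
        pdt (pdt u) x t + α * pdx (pdx (pdx (pdx u))) x t = 0)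
    (hcl : ∀ t ≥ (0:ℝ), u ℓ t = 0 ∧ pdx u ℓ t = 0)
    {τ : ℝ} (hτ : 0 ≤ τ) :
    ∫ x in (0:ℝ)..ℓ, ((x - ℓ) * (pdt (pdx u) x τ * pdt u x τ + pdx u x τ * pdt (pdt u) x τ))
      = ℓ / 2 * ((pdt u 0 τ) ^ 2 + α * (pdx (pdx u) 0 τ) ^ 2)
        - (1 / 2) * (∫ x in (0:ℝ)..ℓ, (pdt u x τ) ^ 2)
        - (3 * α / 2) * (∫ x in (0:ℝ)..ℓ, (pdx (pdx u) x τ) ^ 2)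
        - pdx u 0 τ * (ℓ * (α * pdx (pdx (pdx u)) 0 τ) + α * pdx (pdx u) 0 τ) := by
  set Φ : ℝ → ℝ := fun y => (y - ℓ) * (pdt u y τ) ^ 2 / 2
      - α * ((y - ℓ) * (pdx u y τ * pdx (pdx (pdx u)) y τ))
      + α * (pdx u y τ * pdx (pdx u) y τ)
      + α * ((y - ℓ) * (pdx (pdx u) y τ) ^ 2) / 2 with hΦ
  set Φd : ℝ → ℝ := fun y => (pdt u y τ) ^ 2 / 2 + (y - ℓ) * (pdt u y τ * pdx (pdt u) y τ)
      - α * ((y - ℓ) * (pdx u y τ * pdx (pdx (pdx (pdx u))) y τ))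
      + 3 * α / 2 * (pdx (pdx u) y τ) ^ 2 with hΦd
  have hderiv : ∀ y : ℝ, HasDerivAt Φ (Φd y) y := by
    intro y
    have hV : HasDerivAt (fun z => pdt u z τ) (pdx (pdt u) y τ) y :=
      hasDerivAt_pdx (contDiff_pdt hu) y τ
    have hU1 : HasDerivAt (fun z => pdx u z τ) (pdx (pdx u) y τ) y :=
      hasDerivAt_pdx (contDiff_pdx hu) y τ
    have hU2 : HasDerivAt (fun z => pdx (pdx u) z τ) (pdx (pdx (pdx u)) y τ) y :=
      hasDerivAt_pdx (contDiff_pdx (contDiff_pdx hu)) y τ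
    have hU3 : HasDerivAt (fun z => pdx (pdx (pdx u)) z τ)
        (pdx (pdx (pdx (pdx u))) y τ) y :=
      hasDerivAt_pdx (contDiff_pdx (contDiff_pdx (contDiff_pdx hu))) y τ
    have hid : HasDerivAt (fun z : ℝ => z - ℓ) 1 y := (hasDerivAt_id y).sub_const ℓ
    have hA := ((((hid.fun_mul (hV.fun_pow 2)).div_const 2).fun_sub
        (((hid.fun_mul (hU1.fun_mul hU3))).const_mul α)).fun_add
        ((hU1.fun_mul hU2).const_mul α)).fun_add
        (((hid.fun_mul (hU2.fun_pow 2)).const_mul α).div_const 2)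
    exact hA.congr_deriv (by ring)
  have hΦdc : Continuous Φd := by
    have c0 : Continuous fun y => pdt u y τ := beam_cont_x (contDiff_pdt hu) τ
    have c1 : Continuous fun y => pdx (pdt u) y τ := beam_cont_x (contDiff_pdx (contDiff_pdt hu)) τ
    have c2 : Continuous fun y => pdx u y τ := beam_cont_x (contDiff_pdx hu) τ
    have c3 : Continuous fun y => pdx (pdx u) y τ := beam_cont_x (contDiff_pdx (contDiff_pdx hu)) τ
    have c4 : Continuous fun y => pdx (pdx (pdx (pdx u))) y τ :=
      beam_cont_x (contDiff_pdx (contDiff_pdx (contDiff_pdx (contDiff_pdx hu)))) τ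
    exact ((((c0.pow 2).div_const 2).add
        (((continuous_id.sub continuous_const)).mul (c0.mul c1))).sub
        (continuous_const.mul ((continuous_id.sub continuous_const).mul (c2.mul c4)))).add
        (continuous_const.mul (c3.pow 2))
  have hcV : Continuous fun x => (pdt u x τ) ^ 2 := (beam_cont_x (contDiff_pdt hu) τ).pow 2
  have hcU2 : Continuous fun x => (pdx (pdx u) x τ) ^ 2 :=
    (beam_cont_x (contDiff_pdx (contDiff_pdx hu)) τ).pow 2
  have hEq : Set.EqOn
      (fun x => (x - ℓ) * (pdt (pdx u) x τ * pdt u x τ + pdx u x τ * pdt (pdt u) x τ))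
      (fun x => Φd x - ((1 / 2) * (pdt u x τ) ^ 2 + (3 * α / 2) * (pdx (pdx u) x τ) ^ 2))
      (Set.uIcc 0 ℓ) := by
    intro x hx
    rw [Set.uIcc_of_le hℓ.le] at hx
    have hp := hpde x hx τ hτ
    have e1 : pdt (pdt u) x τ = -(α * pdx (pdx (pdx (pdx u))) x τ) := by linarith
    have e2 : pdt (pdx u) x τ = pdx (pdt u) x τ := pdt_pdx_comm hu x τ
    dsimp only
    simp only [hΦd]
    rw [e1, e2]; ring
  rw [intervalIntegral.integral_congr hEq]
  rw [intervalIntegral.integral_sub (hΦdc.intervalIntegrable 0 ℓ)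
      (((continuous_const.fun_mul hcV).fun_add (continuous_const.fun_mul hcU2)).intervalIntegrable 0 ℓ)]
  rw [intervalIntegral.integral_add ((continuous_const.fun_mul hcV).intervalIntegrable 0 ℓ)
      ((continuous_const.fun_mul hcU2).intervalIntegrable 0 ℓ)]
  rw [intervalIntegral.integral_const_mul, intervalIntegral.integral_const_mul]
  rw [intervalIntegral.integral_eq_sub_of_hasDerivAt (fun y _ => hderiv y)
      (hΦdc.intervalIntegrable 0 ℓ)]
  simp only [hΦ]
  rw [(hcl τ hτ).2]
  ring

lemma beam_multiplier (hℓ : 0 < ℓ) (hu : ContDiff ℝ (⊤ : ℕ∞) (uncurry u))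
    (hpde : ∀ x ∈ Set.Icc (0:ℝ) ℓ, ∀ t ≥ (0:ℝ),
        pdt (pdt u) x t + α * pdx (pdx (pdx (pdx u))) x t = 0)
    (hcl : ∀ t ≥ (0:ℝ), u ℓ t = 0 ∧ pdx u ℓ t = 0)
    {t : ℝ} (ht : 0 ≤ t) :
    ℓ * (∫ τ in (0:ℝ)..t, ((pdt u 0 τ) ^ 2 + α * (pdx (pdx u) 0 τ) ^ 2)) -
        ∫ τ in (0:ℝ)..t, ∫ x in (0:ℝ)..ℓ,
          ((pdt u x τ) ^ 2 + α * (pdx (pdx u) x τ) ^ 2 + (pdx (pdx u) x τ) ^ 2)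
      = 2 * ((∫ x in (0:ℝ)..ℓ, ((x - ℓ) * (pdx u x t * pdt u x t)))
          - ∫ x in (0:ℝ)..ℓ, ((x - ℓ) * (pdx u x 0 * pdt u x 0)))
        + (2 * α - 1) * (∫ τ in (0:ℝ)..t, ∫ x in (0:ℝ)..ℓ, (pdx (pdx u) x τ) ^ 2)
        + 2 * ∫ τ in (0:ℝ)..t,
            (pdx u 0 τ * (ℓ * (α * pdx (pdx (pdx u)) 0 τ) + α * pdx (pdx u) 0 τ)) := by
  have cT : Continuous (uncurry (pdt u)) := (contDiff_pdt hu).continuous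
  have cTT : Continuous (uncurry (pdt (pdt u))) := (contDiff_pdt (contDiff_pdt hu)).continuous
  have cX : Continuous (uncurry (pdx u)) := (contDiff_pdx hu).continuous
  have cTX : Continuous (uncurry (pdt (pdx u))) := (contDiff_pdt (contDiff_pdx hu)).continuous
  have cXX : Continuous (uncurry (pdx (pdx u))) := (contDiff_pdx (contDiff_pdx hu)).continuous
  -- F via time Fubini
  have hg : ∀ x τ : ℝ, HasDerivAt (fun s => (x - ℓ) * (pdx u x s * pdt u x s))
      ((x - ℓ) * (pdt (pdx u) x τ * pdt u x τ + pdx u x τ * pdt (pdt u) x τ)) τ := by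
    intro x τ
    have hw : HasDerivAt (fun s => pdx u x s) (pdt (pdx u) x τ) τ :=
      hasDerivAt_pdt (contDiff_pdx hu) x τ
    have hv : HasDerivAt (fun s => pdt u x s) (pdt (pdt u) x τ) τ :=
      hasDerivAt_pdt (contDiff_pdt hu) x τ
    exact (hw.mul hv).const_mul (x - ℓ)
  have hgc : Continuous (uncurry fun (x τ : ℝ) => (x - ℓ) * (pdx u x τ * pdt u x τ)) := by
    show Continuous fun p : ℝ × ℝ => (p.1 - ℓ) * (uncurry (pdx u) p * uncurry (pdt u) p)
    exact (continuous_fst.sub continuous_const).mul (cX.mul cT)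
  have hgtc : Continuous (uncurry fun (x τ : ℝ) =>
      (x - ℓ) * (pdt (pdx u) x τ * pdt u x τ + pdx u x τ * pdt (pdt u) x τ)) := by
    show Continuous fun p : ℝ × ℝ => (p.1 - ℓ) *
      (uncurry (pdt (pdx u)) p * uncurry (pdt u) p + uncurry (pdx u) p * uncurry (pdt (pdt u)) p)
    exact (continuous_fst.sub continuous_const).mul ((cTX.mul cT).add (cX.mul cTT))
  have hfub := beam_time_fubini (t := t)
      (g := fun x τ => (x - ℓ) * (pdx u x τ * pdt u x τ))
      (gt := fun x τ => (x - ℓ) * (pdt (pdx u) x τ * pdt u x τ + pdx u x τ * pdt (pdt u) x τ))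
      hg hgc hgtc hℓ.le ht
  -- continuity of parametric integrals
  have hrq : Continuous (uncurry fun (x τ : ℝ) => (pdt u x τ) ^ 2) := by
    show Continuous fun p : ℝ × ℝ => (uncurry (pdt u) p) ^ 2
    exact cT.pow 2
  have hqq : Continuous (uncurry fun (x τ : ℝ) => (pdx (pdx u) x τ) ^ 2) := by
    show Continuous fun p : ℝ × ℝ => (uncurry (pdx (pdx u)) p) ^ 2
    exact cXX.pow 2
  have hrc : Continuous fun τ => ∫ x in (0:ℝ)..ℓ, (pdt u x τ) ^ 2 :=
    beam_continuous_param hrq 0 ℓ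
  have hqc : Continuous fun τ => ∫ x in (0:ℝ)..ℓ, (pdx (pdx u) x τ) ^ 2 :=
    beam_continuous_param hqq 0 ℓ
  have hGc : Continuous fun τ => ∫ x in (0:ℝ)..ℓ,
      ((x - ℓ) * (pdt (pdx u) x τ * pdt u x τ + pdx u x τ * pdt (pdt u) x τ)) :=
    beam_continuous_param hgtc 0 ℓ
  have hZc : Continuous fun τ =>
      pdx u 0 τ * (ℓ * (α * pdx (pdx (pdx u)) 0 τ) + α * pdx (pdx u) 0 τ) := by
    have c1 : Continuous fun τ => pdx u 0 τ := beam_cont_t (contDiff_pdx hu) 0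
    have c2 : Continuous fun τ => pdx (pdx (pdx u)) 0 τ :=
      beam_cont_t (contDiff_pdx (contDiff_pdx (contDiff_pdx hu))) 0
    have c3 : Continuous fun τ => pdx (pdx u) 0 τ := beam_cont_t (contDiff_pdx (contDiff_pdx hu)) 0
    exact c1.mul ((continuous_const.mul (continuous_const.mul c2)).add (continuous_const.mul c3))
  have hJ0c : Continuous fun τ => (pdt u 0 τ) ^ 2 + α * (pdx (pdx u) 0 τ) ^ 2 := by
    have c1 : Continuous fun τ => pdt u 0 τ := beam_cont_t (contDiff_pdt hu) 0
    have c3 : Continuous fun τ => pdx (pdx u) 0 τ := beam_cont_t (contDiff_pdx (contDiff_pdx hu)) 0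
    exact (c1.pow 2).add (continuous_const.mul (c3.pow 2))
  -- split the double integral integrand
  have hsplit : ∀ τ : ℝ, (∫ x in (0:ℝ)..ℓ,
      ((pdt u x τ) ^ 2 + α * (pdx (pdx u) x τ) ^ 2 + (pdx (pdx u) x τ) ^ 2))
      = (∫ x in (0:ℝ)..ℓ, (pdt u x τ) ^ 2)
        + α * (∫ x in (0:ℝ)..ℓ, (pdx (pdx u) x τ) ^ 2)
        + ∫ x in (0:ℝ)..ℓ, (pdx (pdx u) x τ) ^ 2 := by
    intro τ
    have i1 : IntervalIntegrable (fun x => (pdt u x τ) ^ 2) volume 0 ℓ :=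
      ((beam_cont_x (contDiff_pdt hu) τ).pow 2).intervalIntegrable 0 ℓ
    have i2 : IntervalIntegrable (fun x => α * (pdx (pdx u) x τ) ^ 2) volume 0 ℓ :=
      (continuous_const.mul ((beam_cont_x (contDiff_pdx (contDiff_pdx hu)) τ).pow 2)).intervalIntegrable 0 ℓ
    have i3 : IntervalIntegrable (fun x => (pdx (pdx u) x τ) ^ 2) volume 0 ℓ :=
      ((beam_cont_x (contDiff_pdx (contDiff_pdx hu)) τ).pow 2).intervalIntegrable 0 ℓ
    rw [intervalIntegral.integral_add (i1.add i2) i3, intervalIntegral.integral_add i1 i2,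
      intervalIntegral.integral_const_mul]
  -- main pointwise identity in τ
  have hEq : Set.EqOn
      (fun τ => ℓ * ((pdt u 0 τ) ^ 2 + α * (pdx (pdx u) 0 τ) ^ 2)
        - (∫ x in (0:ℝ)..ℓ, ((pdt u x τ) ^ 2 + α * (pdx (pdx u) x τ) ^ 2 + (pdx (pdx u) x τ) ^ 2)))
      (fun τ => 2 * (∫ x in (0:ℝ)..ℓ,
          ((x - ℓ) * (pdt (pdx u) x τ * pdt u x τ + pdx u x τ * pdt (pdt u) x τ)))
        + (2 * α - 1) * (∫ x in (0:ℝ)..ℓ, (pdx (pdx u) x τ) ^ 2)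
        + 2 * (pdx u 0 τ * (ℓ * (α * pdx (pdx (pdx u)) 0 τ) + α * pdx (pdx u) 0 τ)))
      (Set.uIcc 0 t) := by
    intro τ hτ
    rw [Set.uIcc_of_le ht] at hτ
    dsimp only
    rw [hsplit τ, beam_mult_space hℓ hu hpde hcl hτ.1]
    ring
  -- integrate the identity
  have hintL : IntervalIntegrable (fun τ => ℓ * ((pdt u 0 τ) ^ 2 + α * (pdx (pdx u) 0 τ) ^ 2))
      volume 0 t := (continuous_const.mul hJ0c).intervalIntegrable 0 t
  have hintI : IntervalIntegrable (fun τ => ∫ x in (0:ℝ)..ℓ,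
      ((pdt u x τ) ^ 2 + α * (pdx (pdx u) x τ) ^ 2 + (pdx (pdx u) x τ) ^ 2)) volume 0 t := by
    have : Continuous fun τ => ∫ x in (0:ℝ)..ℓ,
        ((pdt u x τ) ^ 2 + α * (pdx (pdx u) x τ) ^ 2 + (pdx (pdx u) x τ) ^ 2) := by
      have : Continuous (uncurry fun (x τ : ℝ) =>
          (pdt u x τ) ^ 2 + α * (pdx (pdx u) x τ) ^ 2 + (pdx (pdx u) x τ) ^ 2) := by
        show Continuous fun p : ℝ × ℝ => (uncurry (pdt u) p) ^ 2
          + α * (uncurry (pdx (pdx u)) p) ^ 2 + (uncurry (pdx (pdx u)) p) ^ 2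
        exact ((cT.pow 2).add (continuous_const.mul (cXX.pow 2))).add (cXX.pow 2)
      exact beam_continuous_param this 0 ℓ
    exact this.intervalIntegrable 0 t
  have step1 : ℓ * (∫ τ in (0:ℝ)..t, ((pdt u 0 τ) ^ 2 + α * (pdx (pdx u) 0 τ) ^ 2)) -
        (∫ τ in (0:ℝ)..t, ∫ x in (0:ℝ)..ℓ,
          ((pdt u x τ) ^ 2 + α * (pdx (pdx u) x τ) ^ 2 + (pdx (pdx u) x τ) ^ 2))
      = ∫ τ in (0:ℝ)..t, (ℓ * ((pdt u 0 τ) ^ 2 + α * (pdx (pdx u) 0 τ) ^ 2)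
        - (∫ x in (0:ℝ)..ℓ, ((pdt u x τ) ^ 2 + α * (pdx (pdx u) x τ) ^ 2 + (pdx (pdx u) x τ) ^ 2))) := by
    rw [intervalIntegral.integral_sub hintL hintI, intervalIntegral.integral_const_mul]
  have step2 : (∫ τ in (0:ℝ)..t, (2 * (∫ x in (0:ℝ)..ℓ,
          ((x - ℓ) * (pdt (pdx u) x τ * pdt u x τ + pdx u x τ * pdt (pdt u) x τ)))
        + (2 * α - 1) * (∫ x in (0:ℝ)..ℓ, (pdx (pdx u) x τ) ^ 2)
        + 2 * (pdx u 0 τ * (ℓ * (α * pdx (pdx (pdx u)) 0 τ) + α * pdx (pdx u) 0 τ))))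
      = 2 * (∫ τ in (0:ℝ)..t, ∫ x in (0:ℝ)..ℓ,
          ((x - ℓ) * (pdt (pdx u) x τ * pdt u x τ + pdx u x τ * pdt (pdt u) x τ)))
        + (2 * α - 1) * (∫ τ in (0:ℝ)..t, ∫ x in (0:ℝ)..ℓ, (pdx (pdx u) x τ) ^ 2)
        + 2 * ∫ τ in (0:ℝ)..t,
            (pdx u 0 τ * (ℓ * (α * pdx (pdx (pdx u)) 0 τ) + α * pdx (pdx u) 0 τ)) := by
    rw [intervalIntegral.integral_add ((continuous_const.fun_mul hGc).fun_add
        (continuous_const.fun_mul hqc) |>.intervalIntegrable 0 t)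
      ((continuous_const.fun_mul hZc).intervalIntegrable 0 t),
      intervalIntegral.integral_add ((continuous_const.fun_mul hGc).intervalIntegrable 0 t)
        ((continuous_const.fun_mul hqc).intervalIntegrable 0 t),
      intervalIntegral.integral_const_mul, intervalIntegral.integral_const_mul,
      intervalIntegral.integral_const_mul]
  rw [step1, intervalIntegral.integral_congr hEq, step2, ← hfub]

end Main


set_option maxHeartbeats 2000000 in
/-- Observability-type estimate (Lemma `lemT` of the paper): under `d γ ≤ 2 γ*`, for every
classical solution of the hybrid Euler–Bernoulli beam system, every `T ≥ 0` and `t ∈ [0,T]`,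
`| ℓ ∫₀ᵗ 𝒥(0,τ) dτ − ∫₀ᵗ∫₀^ℓ (𝒥(x,τ) + u_xx(x,τ)²) dx dτ | ≤ c (1+T) E(0)` with a constant
`c` depending only on the parameters. -/
theorem boundary_observability (ℓ α m d J γ γs : ℝ)
    (hℓ : 0 < ℓ) (hα : 0 < α) (hm : 0 < m) (hd : 0 < d) (hJ : 0 < J)
    (hγ : 0 < γ) (hγs : 0 < γs) (hyp : d * γ ≤ 2 * γs) :
    ∃ c > 0, ∀ u : ℝ → ℝ → ℝ, ContDiff ℝ (⊤ : ℕ∞) (Function.uncurry u) →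
      (∀ x ∈ Set.Icc (0:ℝ) ℓ, ∀ t ≥ (0:ℝ),
        pdt (pdt u) x t + α * pdx (pdx (pdx (pdx u))) x t = 0) →
      (∀ t ≥ (0:ℝ),
        m * pdt (pdt u) 0 t + m * d * pdt (pdt (pdx u)) 0 t + γ * pdt u 0 t +
          α * pdx (pdx (pdx u)) 0 t = 0) →
      (∀ t ≥ (0:ℝ),
        m * d * pdt (pdt u) 0 t + (J + m * d ^ 2) * pdt (pdt (pdx u)) 0 t +
          d * γ * pdt u 0 t + d * γs * pdt (pdx u) 0 t - α * pdx (pdx u) 0 t = 0) →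
      (∀ t ≥ (0:ℝ), u ℓ t = 0 ∧ pdx u ℓ t = 0) →
      ∀ T ≥ (0:ℝ), ∀ t ∈ Set.Icc (0:ℝ) T,
        |ℓ * (∫ τ in (0:ℝ)..t, ((pdt u 0 τ) ^ 2 + α * (pdx (pdx u) 0 τ) ^ 2)) -
            ∫ τ in (0:ℝ)..t, ∫ x in (0:ℝ)..ℓ,
              ((pdt u x τ) ^ 2 + α * (pdx (pdx u) x τ) ^ 2 + (pdx (pdx u) x τ) ^ 2)| ≤
          c * (1 + T) * energy ℓ α m d J u 0 := by
  obtain ⟨hc0pos, hquad0⟩ := beam_quad_lower (A := γ) (B := d * γ) (C := d * γs) hγ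
    (by positivity) (by nlinarith [mul_pos hd hγ, mul_pos hd hγs, mul_pos (mul_pos hd hγ) hγs])
  obtain ⟨hc2pos, hquad2⟩ := beam_quad_lower (A := m / 2) (B := m * d)
    (C := (J + m * d ^ 2) / 2) (by positivity) (by positivity)
    (by nlinarith [mul_pos hm hJ])
  set c0 : ℝ := (γ * (d * γs) - (d * γ) ^ 2 / 4) / (γ + d * γs) with hc0def
  set c2 : ℝ := (m / 2 * ((J + m * d ^ 2) / 2) - (m * d) ^ 2 / 4) / (m / 2 + (J + m * d ^ 2) / 2)
    with hc2def
  set P : ℝ := 2 * ℓ / α with hPdef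
  set QB : ℝ := 2 / α with hQBdef
  set V : ℝ := 1 / c2 with hVdef
  set I1 : ℝ := 1 / c0 with hI1def
  have hPpos : 0 < P := by rw [hPdef]; positivity
  have hQBpos : 0 < QB := by rw [hQBdef]; positivity
  have hVpos : 0 < V := by rw [hVdef]; exact one_div_pos.mpr hc2pos
  have hI1pos : 0 < I1 := by rw [hI1def]; exact one_div_pos.mpr hc0pos
  set CF : ℝ := 2 * ℓ * (ℓ ^ 2 * QB + 2) with hCFdef
  set CB : ℝ := |2 * α - 1| * QB with hCBdef
  set CZ1 : ℝ := 2 * (|m * d - ℓ * m| * ((P + V) + I1)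
    + |J + m * d ^ 2 - ℓ * m * d| * ((P + V) + I1)
    + (|d * γ - ℓ * γ| + d * γs) * I1) with hCZ1def
  set CZ2 : ℝ := 2 * ((|d * γ - ℓ * γ| + d * γs) * (P / 2)) with hCZ2def
  have hCFpos : 0 ≤ CF := by
    rw [hCFdef]; positivity
  have hCBpos : 0 ≤ CB := by
    rw [hCBdef]; positivity
  have hCZ1pos : 0 ≤ CZ1 := by
    rw [hCZ1def]
    have := abs_nonneg (m * d - ℓ * m)
    have := abs_nonneg (J + m * d ^ 2 - ℓ * m * d)
    have := abs_nonneg (d * γ - ℓ * γ)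
    positivity
  have hCZ2pos : 0 ≤ CZ2 := by
    rw [hCZ2def]
    have := abs_nonneg (d * γ - ℓ * γ)
    positivity
  refine ⟨1 + CF + CB + CZ1 + CZ2, by linarith, ?_⟩
  intro u hu hpde hbc1 hbc2 hcl T hT t ht
  obtain ⟨ht0, htT⟩ := ht
  -- continuity of boundary traces
  have cv0 : Continuous fun τ => pdt u 0 τ := beam_cont_t (contDiff_pdt hu) 0
  have cw0 : Continuous fun τ => pdt (pdx u) 0 τ := beam_cont_t (contDiff_pdt (contDiff_pdx hu)) 0
  have cp : Continuous fun τ => pdx u 0 τ := beam_cont_t (contDiff_pdx hu) 0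
  have ca0 : Continuous fun τ => pdt (pdt u) 0 τ := beam_cont_t (contDiff_pdt (contDiff_pdt hu)) 0
  have cb0 : Continuous fun τ => pdt (pdt (pdx u)) 0 τ :=
    beam_cont_t (contDiff_pdt (contDiff_pdt (contDiff_pdx hu))) 0
  have cu2 : Continuous fun τ => pdx (pdx u) 0 τ := beam_cont_t (contDiff_pdx (contDiff_pdx hu)) 0
  have cu3 : Continuous fun τ => pdx (pdx (pdx u)) 0 τ :=
    beam_cont_t (contDiff_pdx (contDiff_pdx (contDiff_pdx hu))) 0
  have cT : Continuous (uncurry (pdt u)) := (contDiff_pdt hu).continuous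
  have cX : Continuous (uncurry (pdx u)) := (contDiff_pdx hu).continuous
  have cXX : Continuous (uncurry (pdx (pdx u))) := (contDiff_pdx (contDiff_pdx hu)).continuous
  -- notation
  set E0 : ℝ := energy ℓ α m d J u 0 with hE0def
  -- splitting of the inner energy integral
  have hsplitJ : ∀ τ : ℝ, (∫ x in (0:ℝ)..ℓ, ((pdt u x τ) ^ 2 + α * (pdx (pdx u) x τ) ^ 2))
      = (∫ x in (0:ℝ)..ℓ, (pdt u x τ) ^ 2)
        + α * (∫ x in (0:ℝ)..ℓ, (pdx (pdx u) x τ) ^ 2) := by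
    intro τ
    have i1 : IntervalIntegrable (fun x => (pdt u x τ) ^ 2) volume 0 ℓ :=
      ((beam_cont_x (contDiff_pdt hu) τ).pow 2).intervalIntegrable 0 ℓ
    have i2 : IntervalIntegrable (fun x => α * (pdx (pdx u) x τ) ^ 2) volume 0 ℓ :=
      (continuous_const.mul ((beam_cont_x (contDiff_pdx (contDiff_pdx hu)) τ).pow 2)).intervalIntegrable 0 ℓ
    rw [intervalIntegral.integral_add i1 i2, intervalIntegral.integral_const_mul]
  have hqnn : ∀ τ : ℝ, 0 ≤ ∫ x in (0:ℝ)..ℓ, (pdx (pdx u) x τ) ^ 2 := fun τ =>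
    intervalIntegral.integral_nonneg hℓ.le (fun x _ => sq_nonneg _)
  have hrnn : ∀ τ : ℝ, 0 ≤ ∫ x in (0:ℝ)..ℓ, (pdt u x τ) ^ 2 := fun τ =>
    intervalIntegral.integral_nonneg hℓ.le (fun x _ => sq_nonneg _)
  -- tip quadratic form bound
  have htip : ∀ τ : ℝ, c2 * ((pdt u 0 τ) ^ 2 + (pdt (pdx u) 0 τ) ^ 2)
      ≤ m / 2 * (pdt u 0 τ) ^ 2 + m * d * (pdt (pdx u) 0 τ) * (pdt u 0 τ)
        + (J + m * d ^ 2) / 2 * (pdt (pdx u) 0 τ) ^ 2 := by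
    intro τ
    have hh := hquad2 (pdt u 0 τ) (pdt (pdx u) 0 τ)
    nlinarith only [hh]
  have htipnn : ∀ τ : ℝ, 0 ≤ m / 2 * (pdt u 0 τ) ^ 2
      + m * d * (pdt (pdx u) 0 τ) * (pdt u 0 τ)
      + (J + m * d ^ 2) / 2 * (pdt (pdx u) 0 τ) ^ 2 := by
    intro τ
    have h1 := htip τ
    nlinarith only [h1, mul_nonneg hc2pos.le (add_nonneg (sq_nonneg (pdt u 0 τ)) (sq_nonneg (pdt (pdx u) 0 τ)))]
  -- energy nonnegative
  have hEnn : ∀ τ : ℝ, 0 ≤ energy ℓ α m d J u τ := by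
    intro τ
    have hint : 0 ≤ ∫ x in (0:ℝ)..ℓ, ((pdt u x τ) ^ 2 + α * (pdx (pdx u) x τ) ^ 2) :=
      intervalIntegral.integral_nonneg hℓ.le (fun x _ => by positivity)
    have h1 := htipnn τ
    simp only [energy]
    nlinarith only [hint, h1]
  have hE0nn : 0 ≤ E0 := hEnn 0
  -- energy identity and dissipation
  have hEid : ∀ τ : ℝ, 0 ≤ τ → energy ℓ α m d J u τ = E0 + ∫ s in (0:ℝ)..τ,
      (-(γ * (pdt u 0 s) ^ 2) - d * γ * (pdt u 0 s) * (pdt (pdx u) 0 s)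
        - d * γs * (pdt (pdx u) 0 s) ^ 2) := fun τ hτ =>
    beam_energy_identity hℓ hu hpde hbc1 hbc2 hcl hτ
  have hDquad : ∀ s : ℝ, c0 * ((pdt u 0 s) ^ 2 + (pdt (pdx u) 0 s) ^ 2)
      ≤ -(-(γ * (pdt u 0 s) ^ 2) - d * γ * (pdt u 0 s) * (pdt (pdx u) 0 s)
        - d * γs * (pdt (pdx u) 0 s) ^ 2) := by
    intro s
    have hh := hquad0 (pdt u 0 s) (pdt (pdx u) 0 s)
    nlinarith only [hh]
  have hDnn : ∀ s : ℝ, 0 ≤ -(-(γ * (pdt u 0 s) ^ 2) - d * γ * (pdt u 0 s) * (pdt (pdx u) 0 s)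
      - d * γs * (pdt (pdx u) 0 s) ^ 2) := by
    intro s
    refine le_trans ?_ (hDquad s)
    positivity
  -- energy decreasing
  have hEub : ∀ τ : ℝ, 0 ≤ τ → energy ℓ α m d J u τ ≤ E0 := by
    intro τ hτ
    have h3 := intervalIntegral.integral_nonneg (f := fun s =>
      -(-(γ * (pdt u 0 s) ^ 2) - d * γ * (pdt u 0 s) * (pdt (pdx u) 0 s)
        - d * γs * (pdt (pdx u) 0 s) ^ 2)) (μ := volume) hτ (fun s _ => hDnn s)
    rw [intervalIntegral.integral_neg] at h3
    have hh := hEid τ hτ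
    linarith only [h3, hh]
  -- integrated dissipation
  have hvw2int : IntervalIntegrable (fun s => (pdt u 0 s) ^ 2 + (pdt (pdx u) 0 s) ^ 2)
      volume 0 t := ((cv0.pow 2).add (cw0.pow 2)).intervalIntegrable 0 t
  have hDint : IntervalIntegrable (fun s =>
      -(-(γ * (pdt u 0 s) ^ 2) - d * γ * (pdt u 0 s) * (pdt (pdx u) 0 s)
        - d * γs * (pdt (pdx u) 0 s) ^ 2)) volume 0 t := by
    apply Continuous.intervalIntegrable
    exact (((continuous_const.mul (cv0.pow 2)).neg.sub
      (((continuous_const.mul cv0).mul cw0))).sub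
      (continuous_const.mul (cw0.pow 2))).neg
  have hdiss : c0 * (∫ s in (0:ℝ)..t, ((pdt u 0 s) ^ 2 + (pdt (pdx u) 0 s) ^ 2)) ≤ E0 := by
    have hmono := intervalIntegral.integral_mono_on (μ := volume) ht0
      (hvw2int.const_mul c0) hDint (fun s _ => hDquad s)
    rw [intervalIntegral.integral_const_mul] at hmono
    have h3 : (∫ s in (0:ℝ)..t,
        -(-(γ * (pdt u 0 s) ^ 2) - d * γ * (pdt u 0 s) * (pdt (pdx u) 0 s)
          - d * γs * (pdt (pdx u) 0 s) ^ 2)) = -(∫ s in (0:ℝ)..t,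
        (-(γ * (pdt u 0 s) ^ 2) - d * γ * (pdt u 0 s) * (pdt (pdx u) 0 s)
          - d * γs * (pdt (pdx u) 0 s) ^ 2)) := intervalIntegral.integral_neg
    rw [h3] at hmono
    have h4 := hEid t ht0
    have h5 := hEnn t
    linarith only [hmono, h4, h5]
  have hvwint_le : (∫ s in (0:ℝ)..t, ((pdt u 0 s) ^ 2 + (pdt (pdx u) 0 s) ^ 2)) ≤ I1 * E0 := by
    rw [hI1def, one_div, inv_mul_eq_div, le_div_iff₀ hc0pos]
    nlinarith only [hdiss]
  have hv2int_le : (∫ s in (0:ℝ)..t, (pdt u 0 s) ^ 2) ≤ I1 * E0 := by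
    refine le_trans ?_ hvwint_le
    apply intervalIntegral.integral_mono_on ht0 ((cv0.fun_pow 2).intervalIntegrable 0 t) hvw2int
    intro s _
    nlinarith only [sq_nonneg (pdt (pdx u) 0 s)]
  have hw2int_le : (∫ s in (0:ℝ)..t, (pdt (pdx u) 0 s) ^ 2) ≤ I1 * E0 := by
    refine le_trans ?_ hvwint_le
    apply intervalIntegral.integral_mono_on ht0 ((cw0.fun_pow 2).intervalIntegrable 0 t) hvw2int
    intro s _
    nlinarith only [sq_nonneg (pdt u 0 s)]
  -- pointwise bounds from the decreasing energy
  have hrq_le : ∀ τ : ℝ, 0 ≤ τ →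
      (∫ x in (0:ℝ)..ℓ, (pdt u x τ) ^ 2)
        + α * (∫ x in (0:ℝ)..ℓ, (pdx (pdx u) x τ) ^ 2) ≤ 2 * E0 := by
    intro τ hτ
    have h1 := hEub τ hτ
    have h2 := htipnn τ
    simp only [energy] at h1
    rw [hsplitJ τ] at h1
    linarith only [h1, h2]
  have hq_le : ∀ τ : ℝ, 0 ≤ τ → (∫ x in (0:ℝ)..ℓ, (pdx (pdx u) x τ) ^ 2) ≤ QB * E0 := by
    intro τ hτ
    have h1 := hrq_le τ hτ
    have h2 := hrnn τ
    rw [hQBdef]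
    rw [div_mul_eq_mul_div, le_div_iff₀ hα]
    nlinarith only [h1, h2]
  have hr_le : ∀ τ : ℝ, 0 ≤ τ → (∫ x in (0:ℝ)..ℓ, (pdt u x τ) ^ 2) ≤ 2 * E0 := by
    intro τ hτ
    have h1 := hrq_le τ hτ
    have h2 := hqnn τ
    nlinarith only [h1, mul_nonneg hα.le h2]
  have hvw_pt : ∀ τ : ℝ, 0 ≤ τ →
      (pdt u 0 τ) ^ 2 + (pdt (pdx u) 0 τ) ^ 2 ≤ V * E0 := by
    intro τ hτ
    have h1 := hEub τ hτ
    have h2 := htip τ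
    have hint : 0 ≤ ∫ x in (0:ℝ)..ℓ, ((pdt u x τ) ^ 2 + α * (pdx (pdx u) x τ) ^ 2) :=
      intervalIntegral.integral_nonneg hℓ.le (fun x _ => by positivity)
    simp only [energy] at h1
    have h3 : c2 * ((pdt u 0 τ) ^ 2 + (pdt (pdx u) 0 τ) ^ 2) ≤ E0 := by
      linarith only [h1, h2, hint]
    rw [hVdef, one_div, inv_mul_eq_div, le_div_iff₀ hc2pos]
    nlinarith only [h3]
  -- pointwise bound on the boundary slope
  have cXXs : ∀ s : ℝ, Continuous fun y => pdx (pdx u) y s :=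
    fun s => beam_cont_x (contDiff_pdx (contDiff_pdx hu)) s
  have hux_pt : ∀ s : ℝ, 0 ≤ s → ∀ x ∈ Set.Icc (0:ℝ) ℓ,
      (pdx u x s) ^ 2 ≤ ℓ * ∫ y in (0:ℝ)..ℓ, (pdx (pdx u) y s) ^ 2 := by
    intro s hs x hx
    have hFTC : ∫ y in x..ℓ, pdx (pdx u) y s = pdx u ℓ s - pdx u x s :=
      intervalIntegral.integral_eq_sub_of_hasDerivAt
        (fun y _ => hasDerivAt_pdx (contDiff_pdx hu) y s)
        ((cXXs s).intervalIntegrable x ℓ)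
    rw [(hcl s hs).2] at hFTC
    have heq : (∫ y in x..ℓ, pdx (pdx u) y s) ^ 2 = (pdx u x s) ^ 2 := by rw [hFTC]; ring
    have hcs := beam_sq_integral_le (cXXs s) hx.2
    have i1 : IntervalIntegrable (fun y => (pdx (pdx u) y s) ^ 2) volume 0 x :=
      ((cXXs s).pow 2).intervalIntegrable 0 x
    have i2 : IntervalIntegrable (fun y => (pdx (pdx u) y s) ^ 2) volume x ℓ :=
      ((cXXs s).pow 2).intervalIntegrable x ℓ
    have hsplit : (∫ y in (0:ℝ)..x, (pdx (pdx u) y s) ^ 2)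
        + (∫ y in x..ℓ, (pdx (pdx u) y s) ^ 2)
        = ∫ y in (0:ℝ)..ℓ, (pdx (pdx u) y s) ^ 2 :=
      intervalIntegral.integral_add_adjacent_intervals i1 i2
    have h0x : 0 ≤ ∫ y in (0:ℝ)..x, (pdx (pdx u) y s) ^ 2 :=
      intervalIntegral.integral_nonneg hx.1 (fun _ _ => sq_nonneg _)
    have hxl : 0 ≤ ∫ y in x..ℓ, (pdx (pdx u) y s) ^ 2 :=
      intervalIntegral.integral_nonneg hx.2 (fun _ _ => sq_nonneg _)
    have s1 : (ℓ - x) * (∫ y in x..ℓ, (pdx (pdx u) y s) ^ 2)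
        ≤ ℓ * ∫ y in x..ℓ, (pdx (pdx u) y s) ^ 2 :=
      mul_le_mul_of_nonneg_right (by linarith [hx.1]) hxl
    have s2 : (∫ y in x..ℓ, (pdx (pdx u) y s) ^ 2)
        ≤ ∫ y in (0:ℝ)..ℓ, (pdx (pdx u) y s) ^ 2 := by linarith only [hsplit, h0x]
    have s3 : ℓ * (∫ y in x..ℓ, (pdx (pdx u) y s) ^ 2)
        ≤ ℓ * ∫ y in (0:ℝ)..ℓ, (pdx (pdx u) y s) ^ 2 :=
      mul_le_mul_of_nonneg_left s2 hℓ.le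
    linarith only [hcs, heq, s1, s3]
  have hp_ptE : ∀ τ : ℝ, 0 ≤ τ → (pdx u 0 τ) ^ 2 ≤ P * E0 := by
    intro τ hτ
    have h0 : (0:ℝ) ∈ Set.Icc (0:ℝ) ℓ := ⟨le_refl _, hℓ.le⟩
    have h1 := hux_pt τ hτ 0 h0
    have h2 := mul_le_mul_of_nonneg_left (hq_le τ hτ) hℓ.le
    have h3 : ℓ * (QB * E0) = P * E0 := by rw [hPdef, hQBdef]; ring
    linarith only [h1, h2, h3]
  -- time-integrated p bound
  have hpint : (∫ s in (0:ℝ)..t, (pdx u 0 s) ^ 2) ≤ T * (P * E0) := by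
    have h1 := intervalIntegral.integral_mono_on (μ := volume) ht0
      ((cp.fun_pow 2).intervalIntegrable 0 t) intervalIntegrable_const
      (fun s hs => hp_ptE s hs.1)
    rw [intervalIntegral.integral_const] at h1
    have h2 : (t - 0) • (P * E0) ≤ T * (P * E0) := by
      rw [smul_eq_mul]
      nlinarith only [mul_nonneg hPpos.le hE0nn, htT, ht0]
    linarith only [h1, h2]
  -- product integral bounds
  have habs2 : ∀ a b : ℝ, |a * b| ≤ (a ^ 2 + b ^ 2) / 2 := by
    intro a b
    rw [abs_mul]
    have h := two_mul_le_add_sq |a| |b|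
    rw [sq_abs, sq_abs] at h
    linarith only [h]
  have hprod_bound : ∀ f g : ℝ → ℝ, Continuous f → Continuous g →
      ∀ Bf Bg : ℝ, (∫ s in (0:ℝ)..t, (f s) ^ 2) ≤ Bf → (∫ s in (0:ℝ)..t, (g s) ^ 2) ≤ Bg →
      |∫ s in (0:ℝ)..t, f s * g s| ≤ (Bf + Bg) / 2 := by
    intro f g hf hg Bf Bg hBf hBg
    have h1 : |∫ s in (0:ℝ)..t, f s * g s| ≤ ∫ s in (0:ℝ)..t, |f s * g s| :=
      intervalIntegral.abs_integral_le_integral_abs ht0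
    have h2 : (∫ s in (0:ℝ)..t, |f s * g s|)
        ≤ ∫ s in (0:ℝ)..t, (1 / 2 * ((f s) ^ 2 + (g s) ^ 2)) := by
      apply intervalIntegral.integral_mono_on (μ := volume) ht0
        ((hf.fun_mul hg).abs.intervalIntegrable 0 t)
        ((continuous_const.fun_mul ((hf.fun_pow 2).fun_add (hg.fun_pow 2))).intervalIntegrable 0 t)
      intro s _
      have hh := habs2 (f s) (g s)
      linarith only [hh]
    have h3 : (∫ s in (0:ℝ)..t, (1 / 2 * ((f s) ^ 2 + (g s) ^ 2)))
        = 1 / 2 * ((∫ s in (0:ℝ)..t, (f s) ^ 2) + ∫ s in (0:ℝ)..t, (g s) ^ 2) := by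
      rw [intervalIntegral.integral_const_mul, intervalIntegral.integral_add
        ((hf.fun_pow 2).intervalIntegrable 0 t) ((hg.fun_pow 2).intervalIntegrable 0 t)]
    rw [h3] at h2
    linarith only [h1, h2, hBf, hBg]
  -- bound on the multiplier functional at a fixed time
  have hFbound : ∀ s : ℝ, 0 ≤ s →
      |∫ x in (0:ℝ)..ℓ, ((x - ℓ) * (pdx u x s * pdt u x s))|
        ≤ ℓ / 2 * (ℓ ^ 2 * (QB * E0) + 2 * E0) := by
    intro s hs
    have cXs : Continuous fun y => pdx u y s := beam_cont_x (contDiff_pdx hu) s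
    have cTs : Continuous fun y => pdt u y s := beam_cont_x (contDiff_pdt hu) s
    have huxint : (∫ x in (0:ℝ)..ℓ, (pdx u x s) ^ 2) ≤ ℓ ^ 2 * (QB * E0) := by
      have h1 := intervalIntegral.integral_mono_on (μ := volume) hℓ.le
        ((cXs.fun_pow 2).intervalIntegrable 0 ℓ) intervalIntegrable_const
        (fun x hx => le_trans (hux_pt s hs x hx)
          (mul_le_mul_of_nonneg_left (hq_le s hs) hℓ.le))
      rw [intervalIntegral.integral_const] at h1
      have h2 : (ℓ - 0) • (ℓ * (QB * E0)) = ℓ ^ 2 * (QB * E0) := by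
        rw [smul_eq_mul]; ring
      linarith only [h1, h2]
    have hrint : (∫ x in (0:ℝ)..ℓ, (pdt u x s) ^ 2) ≤ 2 * E0 := hr_le s hs
    have h1 : |∫ x in (0:ℝ)..ℓ, ((x - ℓ) * (pdx u x s * pdt u x s))|
        ≤ ∫ x in (0:ℝ)..ℓ, |(x - ℓ) * (pdx u x s * pdt u x s)| :=
      intervalIntegral.abs_integral_le_integral_abs hℓ.le
    have h2 : (∫ x in (0:ℝ)..ℓ, |(x - ℓ) * (pdx u x s * pdt u x s)|)
        ≤ ∫ x in (0:ℝ)..ℓ, (ℓ / 2 * ((pdx u x s) ^ 2 + (pdt u x s) ^ 2)) := by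
      apply intervalIntegral.integral_mono_on (μ := volume) hℓ.le
        (((continuous_id.fun_sub continuous_const).fun_mul (cXs.fun_mul cTs)).abs.intervalIntegrable 0 ℓ)
        ((continuous_const.fun_mul ((cXs.fun_pow 2).fun_add (cTs.fun_pow 2))).intervalIntegrable 0 ℓ)
      intro x hx
      have e1 : |x - ℓ| ≤ ℓ := by
        rw [abs_le]
        constructor
        · linarith only [hx.1]
        · linarith only [hx.2, hℓ]
      have e2 := habs2 (pdx u x s) (pdt u x s)
      calc |(x - ℓ) * (pdx u x s * pdt u x s)|
          = |x - ℓ| * |pdx u x s * pdt u x s| := abs_mul _ _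
        _ ≤ ℓ * (((pdx u x s) ^ 2 + (pdt u x s) ^ 2) / 2) :=
            mul_le_mul e1 e2 (abs_nonneg _) hℓ.le
        _ = ℓ / 2 * ((pdx u x s) ^ 2 + (pdt u x s) ^ 2) := by ring
    have h3 : (∫ x in (0:ℝ)..ℓ, (ℓ / 2 * ((pdx u x s) ^ 2 + (pdt u x s) ^ 2)))
        = ℓ / 2 * ((∫ x in (0:ℝ)..ℓ, (pdx u x s) ^ 2)
          + ∫ x in (0:ℝ)..ℓ, (pdt u x s) ^ 2) := by
      rw [intervalIntegral.integral_const_mul, intervalIntegral.integral_add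
        ((cXs.fun_pow 2).intervalIntegrable 0 ℓ) ((cTs.fun_pow 2).intervalIntegrable 0 ℓ)]
    rw [h3] at h2
    have h4 : ℓ / 2 * ((∫ x in (0:ℝ)..ℓ, (pdx u x s) ^ 2)
          + ∫ x in (0:ℝ)..ℓ, (pdt u x s) ^ 2)
        ≤ ℓ / 2 * (ℓ ^ 2 * (QB * E0) + 2 * E0) := by
      apply mul_le_mul_of_nonneg_left (by linarith only [huxint, hrint]) (by positivity)
    linarith only [h1, h2, h4]
  -- the Z-term: boundary-condition substitution and integration by parts in time
  have hZid : (∫ s in (0:ℝ)..t,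
        (pdx u 0 s * (ℓ * (α * pdx (pdx (pdx u)) 0 s) + α * pdx (pdx u) 0 s)))
      = (m * d - ℓ * m) * ((pdx u 0 t * pdt u 0 t) - (pdx u 0 0 * pdt u 0 0)
          - ∫ s in (0:ℝ)..t, pdt (pdx u) 0 s * pdt u 0 s)
        + (J + m * d ^ 2 - ℓ * m * d) * ((pdx u 0 t * pdt (pdx u) 0 t)
          - (pdx u 0 0 * pdt (pdx u) 0 0)
          - ∫ s in (0:ℝ)..t, pdt (pdx u) 0 s * pdt (pdx u) 0 s)
        + (d * γ - ℓ * γ) * (∫ s in (0:ℝ)..t, pdx u 0 s * pdt u 0 s)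
        + d * γs * (∫ s in (0:ℝ)..t, pdx u 0 s * pdt (pdx u) 0 s) := by
    have hEqZ : Set.EqOn (fun s =>
        (pdx u 0 s * (ℓ * (α * pdx (pdx (pdx u)) 0 s) + α * pdx (pdx u) 0 s)))
        (fun s => (m * d - ℓ * m) * (pdx u 0 s * pdt (pdt u) 0 s)
          + (J + m * d ^ 2 - ℓ * m * d) * (pdx u 0 s * pdt (pdt (pdx u)) 0 s)
          + (d * γ - ℓ * γ) * (pdx u 0 s * pdt u 0 s)
          + d * γs * (pdx u 0 s * pdt (pdx u) 0 s)) (Set.uIcc 0 t) := by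
      intro s hs
      rw [Set.uIcc_of_le ht0] at hs
      dsimp only
      linear_combination (ℓ * pdx u 0 s) * hbc1 s hs.1 - (pdx u 0 s) * hbc2 s hs.1
    rw [intervalIntegral.integral_congr hEqZ]
    have i1 : IntervalIntegrable (fun s => (m * d - ℓ * m) * (pdx u 0 s * pdt (pdt u) 0 s))
        volume 0 t := (continuous_const.mul (cp.mul ca0)).intervalIntegrable 0 t
    have i2 : IntervalIntegrable (fun s =>
        (J + m * d ^ 2 - ℓ * m * d) * (pdx u 0 s * pdt (pdt (pdx u)) 0 s)) volume 0 t :=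
      (continuous_const.mul (cp.mul cb0)).intervalIntegrable 0 t
    have i3 : IntervalIntegrable (fun s => (d * γ - ℓ * γ) * (pdx u 0 s * pdt u 0 s))
        volume 0 t := (continuous_const.mul (cp.mul cv0)).intervalIntegrable 0 t
    have i4 : IntervalIntegrable (fun s => d * γs * (pdx u 0 s * pdt (pdx u) 0 s))
        volume 0 t := (continuous_const.mul (cp.mul cw0)).intervalIntegrable 0 t
    rw [intervalIntegral.integral_add ((i1.add i2).add i3) i4,
      intervalIntegral.integral_add (i1.add i2) i3,
      intervalIntegral.integral_add i1 i2,
      intervalIntegral.integral_const_mul, intervalIntegral.integral_const_mul,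
      intervalIntegral.integral_const_mul, intervalIntegral.integral_const_mul]
    have hibp1 : (∫ s in (0:ℝ)..t, pdx u 0 s * pdt (pdt u) 0 s)
        = pdx u 0 t * pdt u 0 t - pdx u 0 0 * pdt u 0 0
          - ∫ s in (0:ℝ)..t, pdt (pdx u) 0 s * pdt u 0 s :=
      intervalIntegral.integral_mul_deriv_eq_deriv_mul
        (fun s _ => hasDerivAt_pdt (contDiff_pdx hu) 0 s)
        (fun s _ => hasDerivAt_pdt (contDiff_pdt hu) 0 s)
        (cw0.intervalIntegrable 0 t) (ca0.intervalIntegrable 0 t)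
    have hibp2 : (∫ s in (0:ℝ)..t, pdx u 0 s * pdt (pdt (pdx u)) 0 s)
        = pdx u 0 t * pdt (pdx u) 0 t - pdx u 0 0 * pdt (pdx u) 0 0
          - ∫ s in (0:ℝ)..t, pdt (pdx u) 0 s * pdt (pdx u) 0 s :=
      intervalIntegral.integral_mul_deriv_eq_deriv_mul
        (fun s _ => hasDerivAt_pdt (contDiff_pdx hu) 0 s)
        (fun s _ => hasDerivAt_pdt (contDiff_pdt (contDiff_pdx hu)) 0 s)
        (cw0.intervalIntegrable 0 t) (cb0.intervalIntegrable 0 t)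
    rw [hibp1, hibp2]
  -- pointwise product bounds at the boundary
  have hbd_pv : ∀ τ : ℝ, 0 ≤ τ → |pdx u 0 τ * pdt u 0 τ| ≤ (P * E0 + V * E0) / 2 := by
    intro τ hτ
    have h1 := habs2 (pdx u 0 τ) (pdt u 0 τ)
    have h2 := hp_ptE τ hτ
    have h3 := hvw_pt τ hτ
    have h4 := sq_nonneg (pdt (pdx u) 0 τ)
    linarith only [h1, h2, h3, h4]
  have hbd_pw : ∀ τ : ℝ, 0 ≤ τ → |pdx u 0 τ * pdt (pdx u) 0 τ| ≤ (P * E0 + V * E0) / 2 := by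
    intro τ hτ
    have h1 := habs2 (pdx u 0 τ) (pdt (pdx u) 0 τ)
    have h2 := hp_ptE τ hτ
    have h3 := hvw_pt τ hτ
    have h4 := sq_nonneg (pdt u 0 τ)
    linarith only [h1, h2, h3, h4]
  have hIwv := hprod_bound _ _ cw0 cv0 _ _ hw2int_le hv2int_le
  have hIww := hprod_bound _ _ cw0 cw0 _ _ hw2int_le hw2int_le
  have hIpv := hprod_bound _ _ cp cv0 _ _ hpint hv2int_le
  have hIpw := hprod_bound _ _ cp cw0 _ _ hpint hw2int_le
  -- bound on the Z integral
  have hZbound : |∫ s in (0:ℝ)..t,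
        (pdx u 0 s * (ℓ * (α * pdx (pdx (pdx u)) 0 s) + α * pdx (pdx u) 0 s))|
      ≤ CZ1 / 2 * E0 + CZ2 / 2 * (T * E0) := by
    rw [hZid]
    have hB1 : |pdx u 0 t * pdt u 0 t - pdx u 0 0 * pdt u 0 0
        - ∫ s in (0:ℝ)..t, pdt (pdx u) 0 s * pdt u 0 s|
        ≤ (P + V) * E0 + I1 * E0 := by
      have e1 := abs_sub (pdx u 0 t * pdt u 0 t - pdx u 0 0 * pdt u 0 0)
        (∫ s in (0:ℝ)..t, pdt (pdx u) 0 s * pdt u 0 s)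
      have e2 := abs_sub (pdx u 0 t * pdt u 0 t) (pdx u 0 0 * pdt u 0 0)
      linarith only [e1, e2, hbd_pv t ht0, hbd_pv 0 le_rfl, hIwv]
    have hB2 : |pdx u 0 t * pdt (pdx u) 0 t - pdx u 0 0 * pdt (pdx u) 0 0
        - ∫ s in (0:ℝ)..t, pdt (pdx u) 0 s * pdt (pdx u) 0 s|
        ≤ (P + V) * E0 + I1 * E0 := by
      have e1 := abs_sub (pdx u 0 t * pdt (pdx u) 0 t - pdx u 0 0 * pdt (pdx u) 0 0)
        (∫ s in (0:ℝ)..t, pdt (pdx u) 0 s * pdt (pdx u) 0 s)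
      have e2 := abs_sub (pdx u 0 t * pdt (pdx u) 0 t) (pdx u 0 0 * pdt (pdx u) 0 0)
      linarith only [e1, e2, hbd_pw t ht0, hbd_pw 0 le_rfl, hIww]
    have hA1 : |(m * d - ℓ * m) * (pdx u 0 t * pdt u 0 t - pdx u 0 0 * pdt u 0 0
        - ∫ s in (0:ℝ)..t, pdt (pdx u) 0 s * pdt u 0 s)|
        ≤ |m * d - ℓ * m| * ((P + V) * E0 + I1 * E0) := by
      rw [abs_mul]
      exact mul_le_mul_of_nonneg_left hB1 (abs_nonneg _)
    have hA2 : |(J + m * d ^ 2 - ℓ * m * d) * (pdx u 0 t * pdt (pdx u) 0 t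
        - pdx u 0 0 * pdt (pdx u) 0 0
        - ∫ s in (0:ℝ)..t, pdt (pdx u) 0 s * pdt (pdx u) 0 s)|
        ≤ |J + m * d ^ 2 - ℓ * m * d| * ((P + V) * E0 + I1 * E0) := by
      rw [abs_mul]
      exact mul_le_mul_of_nonneg_left hB2 (abs_nonneg _)
    have hA3 : |(d * γ - ℓ * γ) * ∫ s in (0:ℝ)..t, pdx u 0 s * pdt u 0 s|
        ≤ |d * γ - ℓ * γ| * ((T * (P * E0) + I1 * E0) / 2) := by
      rw [abs_mul]
      exact mul_le_mul_of_nonneg_left hIpv (abs_nonneg _)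
    have hA4 : |d * γs * ∫ s in (0:ℝ)..t, pdx u 0 s * pdt (pdx u) 0 s|
        ≤ d * γs * ((T * (P * E0) + I1 * E0) / 2) := by
      rw [abs_mul, abs_of_pos (by positivity : (0:ℝ) < d * γs)]
      exact mul_le_mul_of_nonneg_left hIpw (by positivity)
    have htri : ∀ a b c e : ℝ, |a + b + c + e| ≤ |a| + |b| + |c| + |e| := by
      intro a b c e
      have t1 := abs_add_le (a + b + c) e
      have t2 := abs_add_le (a + b) c
      have t3 := abs_add_le a b
      linarith only [t1, t2, t3]
    have htr := htri ((m * d - ℓ * m) * (pdx u 0 t * pdt u 0 t - pdx u 0 0 * pdt u 0 0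
        - ∫ s in (0:ℝ)..t, pdt (pdx u) 0 s * pdt u 0 s))
      ((J + m * d ^ 2 - ℓ * m * d) * (pdx u 0 t * pdt (pdx u) 0 t
        - pdx u 0 0 * pdt (pdx u) 0 0
        - ∫ s in (0:ℝ)..t, pdt (pdx u) 0 s * pdt (pdx u) 0 s))
      ((d * γ - ℓ * γ) * ∫ s in (0:ℝ)..t, pdx u 0 s * pdt u 0 s)
      (d * γs * ∫ s in (0:ℝ)..t, pdx u 0 s * pdt (pdx u) 0 s)
    rw [hCZ1def, hCZ2def]
    have hslack1 : 0 ≤ |d * γ - ℓ * γ| * (T * (P * E0)) :=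
      mul_nonneg (abs_nonneg _) (mul_nonneg hT (mul_nonneg hPpos.le hE0nn))
    have hslack2 : 0 ≤ |d * γ - ℓ * γ| * (I1 * E0) :=
      mul_nonneg (abs_nonneg _) (mul_nonneg hI1pos.le hE0nn)
    have hslack3 : 0 ≤ d * γs * (T * (P * E0)) :=
      mul_nonneg (by positivity) (mul_nonneg hT (mul_nonneg hPpos.le hE0nn))
    have hslack4 : 0 ≤ d * γs * (I1 * E0) :=
      mul_nonneg (by positivity) (mul_nonneg hI1pos.le hE0nn)
    nlinarith only [htr, hA1, hA2, hA3, hA4, hslack1, hslack2, hslack3, hslack4]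
  -- bound on the double integral of u_xx^2
  have hqq' : Continuous (uncurry fun (x τ : ℝ) => (pdx (pdx u) x τ) ^ 2) := by
    show Continuous fun p : ℝ × ℝ => (uncurry (pdx (pdx u)) p) ^ 2
    exact cXX.pow 2
  have hqct : Continuous fun τ => ∫ x in (0:ℝ)..ℓ, (pdx (pdx u) x τ) ^ 2 :=
    beam_continuous_param hqq' 0 ℓ
  have hQ2nn : 0 ≤ ∫ τ in (0:ℝ)..t, ∫ x in (0:ℝ)..ℓ, (pdx (pdx u) x τ) ^ 2 :=
    intervalIntegral.integral_nonneg ht0 (fun τ _ => hqnn τ)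
  have hQ2le : (∫ τ in (0:ℝ)..t, ∫ x in (0:ℝ)..ℓ, (pdx (pdx u) x τ) ^ 2)
      ≤ T * (QB * E0) := by
    have h1 := intervalIntegral.integral_mono_on (μ := volume) ht0
      (hqct.intervalIntegrable 0 t) intervalIntegrable_const
      (fun τ hτ => hq_le τ hτ.1)
    rw [intervalIntegral.integral_const] at h1
    have h2 : (t - 0) • (QB * E0) ≤ T * (QB * E0) := by
      rw [smul_eq_mul]
      nlinarith only [mul_nonneg hQBpos.le hE0nn, htT, ht0]
    linarith only [h1, h2]
  -- final assembly
  have key := beam_multiplier (ℓ := ℓ) (α := α) (u := u) hℓ hu hpde hcl ht0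
  rw [key]
  have hA : |2 * ((∫ x in (0:ℝ)..ℓ, ((x - ℓ) * (pdx u x t * pdt u x t)))
      - ∫ x in (0:ℝ)..ℓ, ((x - ℓ) * (pdx u x 0 * pdt u x 0)))| ≤ CF * E0 := by
    rw [abs_mul, abs_of_pos (by norm_num : (0:ℝ) < 2)]
    have e1 := abs_sub (∫ x in (0:ℝ)..ℓ, ((x - ℓ) * (pdx u x t * pdt u x t)))
      (∫ x in (0:ℝ)..ℓ, ((x - ℓ) * (pdx u x 0 * pdt u x 0)))
    have e2 := hFbound t ht0
    have e3 := hFbound 0 le_rfl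
    have e4 : 2 * (2 * (ℓ / 2 * (ℓ ^ 2 * (QB * E0) + 2 * E0))) = CF * E0 := by
      rw [hCFdef]; ring
    linarith only [e1, e2, e3, e4]
  have hB : |(2 * α - 1) * (∫ τ in (0:ℝ)..t, ∫ x in (0:ℝ)..ℓ, (pdx (pdx u) x τ) ^ 2)|
      ≤ CB * (T * E0) := by
    rw [abs_mul, abs_of_nonneg hQ2nn]
    have e1 := mul_le_mul_of_nonneg_left hQ2le (abs_nonneg (2 * α - 1))
    have e2 : |2 * α - 1| * (T * (QB * E0)) = CB * (T * E0) := by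
      rw [hCBdef]; ring
    linarith only [e1, e2]
  have hC : |2 * ∫ s in (0:ℝ)..t,
      (pdx u 0 s * (ℓ * (α * pdx (pdx (pdx u)) 0 s) + α * pdx (pdx u) 0 s))|
      ≤ CZ1 * E0 + CZ2 * (T * E0) := by
    rw [abs_mul, abs_of_pos (by norm_num : (0:ℝ) < 2)]
    linarith only [hZbound]
  have htri : ∀ a b c : ℝ, |a + b + c| ≤ |a| + |b| + |c| := by
    intro a b c
    have t1 := abs_add_le (a + b) c
    have t2 := abs_add_le a b
    linarith only [t1, t2]
  have htr := htri (2 * ((∫ x in (0:ℝ)..ℓ, ((x - ℓ) * (pdx u x t * pdt u x t)))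
      - ∫ x in (0:ℝ)..ℓ, ((x - ℓ) * (pdx u x 0 * pdt u x 0))))
    ((2 * α - 1) * (∫ τ in (0:ℝ)..t, ∫ x in (0:ℝ)..ℓ, (pdx (pdx u) x τ) ^ 2))
    (2 * ∫ s in (0:ℝ)..t,
      (pdx u 0 s * (ℓ * (α * pdx (pdx (pdx u)) 0 s) + α * pdx (pdx u) 0 s)))
  nlinarith only [htr, hA, hB, hC, hE0nn, hT, hCFpos, hCBpos, hCZ1pos, hCZ2pos,
    mul_nonneg hT hE0nn, mul_nonneg hCFpos (mul_nonneg hT hE0nn),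
    mul_nonneg hCBpos hE0nn, mul_nonneg hCZ1pos (mul_nonneg hT hE0nn),
    mul_nonneg hCZ2pos hE0nn]
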